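/- arXiv:1204.0495 — 2 statements merged into one kernel-verified Lean document; each statement's English description precedes it below -/
import Mathlib

section
/- Let G and H be connected finite simple graphs of order n₁ ≥ 2 and n₂ ≥ 2, of diameter two, with maximum degrees Δ₁ and Δ₂, respectively. If Δ₁ ≠ n₁ − 1 or Δ₂ ≠ n₂ − 1, then dim_s(G + H) = dim_s(G) + dim_s(H). -/
open SimpleGraph

/-- A vertex `w` strongly resolves the pair `u`, `v` if `v` lies on some shortest `u`–`w`
path or `u` lies on some shortest `v`–`w` path. -/
def StronglyResolves {V : Type*} (G : SimpleGraph V) (w u v : V) : Prop :=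
  G.dist u w = G.dist u v + G.dist v w ∨ G.dist v w = G.dist v u + G.dist u w

/-- `S` is a strong resolving set for `G` if every pair of distinct vertices is strongly
resolved by some vertex of `S`. -/
def IsStrongResolvingSet {V : Type*} (G : SimpleGraph V) (S : Set V) : Prop :=
  ∀ u v : V, u ≠ v → ∃ w ∈ S, StronglyResolves G w u v

/-- The strong metric dimension: the minimum cardinality of a strong resolving set. -/
noncomputable def strongDim {V : Type*} (G : SimpleGraph V) [Fintype V] : ℕ :=
  sInf {k | ∃ S : Finset V, IsStrongResolvingSet G ↑S ∧ S.card = k}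

/-- The closed neighborhood of a vertex. -/
def closedNbhd {V : Type*} (G : SimpleGraph V) (v : V) : Set V :=
  insert v (G.neighborSet v)

/-- A twin-free clique: a clique containing no pair of true twins. -/
def IsTwinFreeClique {V : Type*} (G : SimpleGraph V) (X : Finset V) : Prop :=
  G.IsClique ↑X ∧ ∀ u ∈ X, ∀ v ∈ X, u ≠ v → closedNbhd G u ≠ closedNbhd G v

/-- The twin-free clique number: maximum cardinality of a twin-free clique. -/
noncomputable def twinFreeCliqueNum {V : Type*} (G : SimpleGraph V) [Fintype V] : ℕ :=
  sSup {k | ∃ X : Finset V, IsTwinFreeClique G X ∧ X.card = k}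

/-- Adjacency relation of the join of two graphs. -/
def joinAdj {V W : Type*} (G : SimpleGraph V) (H : SimpleGraph W) :
    V ⊕ W → V ⊕ W → Prop
  | Sum.inl a, Sum.inl b => G.Adj a b
  | Sum.inr a, Sum.inr b => H.Adj a b
  | Sum.inl _, Sum.inr _ => True
  | Sum.inr _, Sum.inl _ => True

/-- The join `G + H`: disjoint union of `G` and `H` plus all edges between them. -/
def joinGraph {V W : Type*} (G : SimpleGraph V) (H : SimpleGraph W) :
    SimpleGraph (V ⊕ W) where
  Adj := joinAdj G H
  symm := by
    constructor
    rintro (a | a) (b | b) h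
    · exact G.adj_symm h
    · trivial
    · trivial
    · exact H.adj_symm h
  loopless := by
    constructor
    rintro (a | a) h
    · exact G.irrefl h
    · exact H.irrefl h

/-- Adjacency relation of the corona product `G ⊙ H`. -/
def coronaAdj {V W : Type*} (G : SimpleGraph V) (H : SimpleGraph W) :
    V ⊕ V × W → V ⊕ V × W → Prop
  | Sum.inl a, Sum.inl b => G.Adj a b
  | Sum.inr p, Sum.inr q => p.1 = q.1 ∧ H.Adj p.2 q.2
  | Sum.inl a, Sum.inr q => a = q.1
  | Sum.inr p, Sum.inl b => p.1 = b

/-- The corona product `G ⊙ H`: one copy of `G` and one copy of `H` for each vertex of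
`G`, with the `i`-th vertex of `G` joined to every vertex of the `i`-th copy of `H`. -/
def corona {V W : Type*} (G : SimpleGraph V) (H : SimpleGraph W) :
    SimpleGraph (V ⊕ V × W) where
  Adj := coronaAdj G H
  symm := by
    constructor
    rintro (a | p) (b | q) h
    · exact G.adj_symm h
    · exact h.symm
    · exact h.symm
    · exact ⟨h.1.symm, H.adj_symm h.2⟩
  loopless := by
    constructor
    rintro (a | p) h
    · exact G.irrefl h
    · exact H.irrefl h.2

/-- The disjoint union of copies of `H`, one copy for each element of `V`. -/
def copies (V : Type*) {W : Type*} (H : SimpleGraph W) : SimpleGraph (V × W) where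
  Adj p q := p.1 = q.1 ∧ H.Adj p.2 q.2
  symm := ⟨fun _ _ h => ⟨h.1.symm, h.2.symm⟩⟩
  loopless := ⟨fun p h => H.irrefl h.2⟩

/-- The algebraic connectivity: the second smallest eigenvalue (with multiplicity,
in nondecreasing order) of the Laplacian matrix. -/
noncomputable def algebraicConnectivity {V : Type*} (G : SimpleGraph V) [Fintype V]
    [DecidableEq V] [DecidableRel G.Adj] : ℝ :=
  (((Finset.univ.val.map ((G.posSemidef_lapMatrix ℝ).isHermitian.eigenvalues)).sort
    (· ≤ ·)).getD 1 0)

/-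
In the join every vertex of `G` is adjacent to every vertex of `H`, so two distinct
non-adjacent vertices on the same side are at distance `2`; when both factors have diameter at
most two, each side therefore sits isometrically in `G + H`. A vertex adjacent to both `u` and
`v` never strongly resolves them, so a strong resolving set of `G + H` restricts to strong
resolving sets of `G` and of `H`. Conversely, the disjoint union of strong resolving sets of
`G` and `H` resolves every pair inside one side. For a cross pair `(u, v)` with `u` in `G` not
universal, `u` has a non-neighbour `x` at distance `2`; then `u` and `x` are mutually maximally
distant, so every strong resolving set of `G` contains `u` or `x`, and each of them strongly
resolves `(u, v)` in `G + H` because `d(x, u) = 2 = d(x, v) + d(v, u)`.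
-/

open Finset Sum

lemma stronglyResolves_comm {V : Type*} {G : SimpleGraph V} {w u v : V} :
    StronglyResolves G w u v ↔ StronglyResolves G w v u :=
  or_comm

lemma stronglyResolves_self_left {V : Type*} (G : SimpleGraph V) (u v : V) :
    StronglyResolves G u u v :=
  Or.inr (by rw [dist_self, add_zero])

lemma not_stronglyResolves_of_adj_of_adj {V : Type*} {G : SimpleGraph V} {w u v : V}
    (huw : G.Adj u w) (hvw : G.Adj v w) (huv : u ≠ v) : ¬StronglyResolves G w u v := by
  have hpos := (huw.reachable.trans hvw.reachable.symm).pos_dist_of_ne huv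
  rw [StronglyResolves, dist_eq_one_iff_adj.2 huw, dist_eq_one_iff_adj.2 hvw, dist_comm (u := v)]
  omega

lemma isStrongResolvingSet_univ {V : Type*} (G : SimpleGraph V) :
    IsStrongResolvingSet G Set.univ := by
  intro u v _
  exact ⟨u, trivial, stronglyResolves_self_left G u v⟩

section StrongDim

variable {V : Type*} [Fintype V] {G : SimpleGraph V}

lemma strongDim_le {S : Finset V} (hS : IsStrongResolvingSet G S) : strongDim G ≤ #S :=
  Nat.sInf_le ⟨S, hS, rfl⟩

variable (G) in
lemma exists_isStrongResolvingSet_card_eq_strongDim :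
    ∃ S : Finset V, IsStrongResolvingSet G S ∧ #S = strongDim G :=
  Nat.sInf_mem (s := {k | ∃ S : Finset V, IsStrongResolvingSet G S ∧ #S = k})
    ⟨_, univ, by simpa using isStrongResolvingSet_univ G, rfl⟩

end StrongDim

namespace SimpleGraph

variable {V : Type*} {G : SimpleGraph V} {u v : V}

lemma ediam_le_two_of_diam_eq_two (h : G.diam = 2) : G.ediam ≤ 2 := by
  rw [← ENat.natCast_toNat (ediam_ne_top_of_diam_ne_zero (by omega)), ← diam, h]
  rfl

lemma preconnected_of_ediam_le_two (hG : G.ediam ≤ 2) : G.Preconnected :=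
  preconnected_of_ediam_ne_top (ne_top_of_le_ne_top (by decide) hG)

lemma dist_le_two_of_ediam_le_two (hG : G.ediam ≤ 2) (u v : V) : G.dist u v ≤ 2 :=
  ENat.toNat_le_toNat (edist_le_ediam.trans hG) (by decide)

lemma dist_eq_two_of_ediam_le_two (hG : G.ediam ≤ 2) (huv : u ≠ v) (hadj : ¬G.Adj u v) :
    G.dist u v = 2 :=
  le_antisymm (dist_le_two_of_ediam_le_two hG u v)
    ((preconnected_of_ediam_le_two hG u v).one_lt_dist_of_ne_of_not_adj huv hadj)

lemma not_isUniversal_of_maxDegree_ne [Fintype V] [DecidableRel G.Adj]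
    (h : G.maxDegree ≠ Fintype.card V - 1) (v : V) : ¬G.IsUniversal v := by
  have : Nonempty V := ⟨v⟩
  have := G.degree_le_maxDegree v
  have := G.maxDegree_lt_card_verts
  rw [← degree_lt_card_sub_one]
  omega

end SimpleGraph

open SimpleGraph

lemma StronglyResolves.eq_or_eq_of_dist_eq_two {V : Type*} {G : SimpleGraph V} {w u v : V}
    (hG : G.ediam ≤ 2) (huv : G.dist u v = 2) (h : StronglyResolves G w u v) :
    w = u ∨ w = v := by
  have := dist_le_two_of_ediam_le_two hG u w
  have := dist_le_two_of_ediam_le_two hG v w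
  have hconn := preconnected_of_ediam_le_two hG
  have hvu : G.dist v u = 2 := by rwa [dist_comm]
  rcases h with h | h
  · exact Or.inr ((hconn v w).dist_eq_zero_iff.1 (by omega)).symm
  · exact Or.inl ((hconn u w).dist_eq_zero_iff.1 (by omega)).symm

section Embedding

variable {V X : Type*} {G : SimpleGraph V} {K : SimpleGraph X} (f : G ↪g K)

lemma SimpleGraph.Embedding.dist_eq_of_ediam_le_two (hG : G.ediam ≤ 2)
    (hK : ∀ u v, (K.commonNeighbors (f u) (f v)).Nonempty) (u v : V) :
    K.dist (f u) (f v) = G.dist u v := by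
  obtain rfl | huv := eq_or_ne u v
  · simp
  by_cases hadj : G.Adj u v
  · rw [dist_eq_one_iff_adj.2 hadj, dist_eq_one_iff_adj.2 (f.map_adj_iff.2 hadj)]
  rw [dist_eq_two_of_ediam_le_two hG huv hadj, dist,
    edist_eq_two_iff.2 ⟨f.injective.ne huv, mt f.map_adj_iff.1 hadj, hK u v⟩]
  rfl

variable {f}

lemma SimpleGraph.Embedding.stronglyResolves_iff
    (hdist : ∀ u v, K.dist (f u) (f v) = G.dist u v) {w u v : V} :
    StronglyResolves K (f w) (f u) (f v) ↔ StronglyResolves G w u v := by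
  simp only [StronglyResolves, hdist]

lemma IsStrongResolvingSet.preimage_of_embedding {S : Set X}
    (hS : IsStrongResolvingSet K S) (hdist : ∀ u v, K.dist (f u) (f v) = G.dist u v)
    (hout : ∀ z ∉ Set.range f, ∀ u, K.Adj (f u) z) : IsStrongResolvingSet G (f ⁻¹' S) := by
  intro u v huv
  obtain ⟨w, hwS, hw⟩ := hS (f u) (f v) (f.injective.ne huv)
  by_cases hw' : w ∈ Set.range f
  · obtain ⟨a, rfl⟩ := hw'
    exact ⟨a, hwS, (f.stronglyResolves_iff hdist).1 hw⟩
  · exact absurd hw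
      (not_stronglyResolves_of_adj_of_adj (hout w hw' u) (hout w hw' v) (f.injective.ne huv))

lemma IsStrongResolvingSet.exists_stronglyResolves_of_forall_adj {S : Set V}
    (hS : IsStrongResolvingSet G S) (hG : G.ediam ≤ 2)
    (hdist : ∀ u v, K.dist (f u) (f v) = G.dist u v) {u : V} (hu : ¬G.IsUniversal u) {z : X}
    (hz : ∀ v, K.Adj (f v) z) : ∃ w ∈ S, StronglyResolves K (f w) (f u) z := by
  obtain ⟨x, hux, hadj⟩ : ∃ x, u ≠ x ∧ ¬G.Adj u x := by simpa [IsUniversal] using hu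
  have hx := dist_eq_two_of_ediam_le_two hG hux hadj
  obtain ⟨w, hwS, hw⟩ := hS u x hux
  rcases hw.eq_or_eq_of_dist_eq_two hG hx with rfl | rfl
  · exact ⟨w, hwS, stronglyResolves_self_left K (f w) z⟩
  · refine ⟨w, hwS, Or.inl ?_⟩
    rw [hdist, hx, dist_eq_one_iff_adj.2 (hz u), dist_comm, dist_eq_one_iff_adj.2 (hz w)]

end Embedding

section Join

variable {V W : Type*}

def SimpleGraph.Embedding.joinInl (G : SimpleGraph V) (H : SimpleGraph W) :
    G ↪g joinGraph G H :=
  ⟨Function.Embedding.inl, Iff.rfl⟩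

def SimpleGraph.Embedding.joinInr (G : SimpleGraph V) (H : SimpleGraph W) :
    H ↪g joinGraph G H :=
  ⟨Function.Embedding.inr, Iff.rfl⟩

variable {G : SimpleGraph V} {H : SimpleGraph W}

lemma joinGraph_dist_inl_inl [Nonempty W] (hG : G.ediam ≤ 2) (u v : V) :
    (joinGraph G H).dist (inl u) (inl v) = G.dist u v :=
  (Embedding.joinInl G H).dist_eq_of_ediam_le_two hG
    (fun _ _ => ⟨inr (Classical.arbitrary W), trivial, trivial⟩) u v

lemma joinGraph_dist_inr_inr [Nonempty V] (hH : H.ediam ≤ 2) (u v : W) :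
    (joinGraph G H).dist (inr u) (inr v) = H.dist u v :=
  (Embedding.joinInr G H).dist_eq_of_ediam_le_two hH
    (fun _ _ => ⟨inl (Classical.arbitrary V), trivial, trivial⟩) u v

lemma IsStrongResolvingSet.toLeft_of_join [Nonempty W] (hG : G.ediam ≤ 2)
    {S : Finset (V ⊕ W)} (hS : IsStrongResolvingSet (joinGraph G H) S) :
    IsStrongResolvingSet G S.toLeft := by
  have := hS.preimage_of_embedding (f := Embedding.joinInl G H) (joinGraph_dist_inl_inl hG)
    (by rintro (a | b) hz u; exacts [absurd ⟨a, rfl⟩ hz, trivial])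
  convert this using 1
  ext
  exact mem_toLeft

lemma IsStrongResolvingSet.toRight_of_join [Nonempty V] (hH : H.ediam ≤ 2)
    {S : Finset (V ⊕ W)} (hS : IsStrongResolvingSet (joinGraph G H) S) :
    IsStrongResolvingSet H S.toRight := by
  have := hS.preimage_of_embedding (f := Embedding.joinInr G H) (joinGraph_dist_inr_inr hH)
    (by rintro (a | b) hz u; exacts [trivial, absurd ⟨b, rfl⟩ hz])
  convert this using 1
  ext
  exact mem_toRight

lemma IsStrongResolvingSet.disjSum_join [Nonempty V] [Nonempty W] (hG : G.ediam ≤ 2)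
    (hH : H.ediam ≤ 2) {S₁ : Finset V} {S₂ : Finset W} (hS₁ : IsStrongResolvingSet G S₁)
    (hS₂ : IsStrongResolvingSet H S₂)
    (hU : (∀ u, ¬G.IsUniversal u) ∨ ∀ v, ¬H.IsUniversal v) :
    IsStrongResolvingSet (joinGraph G H) (S₁.disjSum S₂) := by
  have cross (a : V) (b : W) : ∃ w ∈ (S₁.disjSum S₂ : Set (V ⊕ W)),
      StronglyResolves (joinGraph G H) w (inl a) (inr b) := by
    rcases hU with hU | hU
    · obtain ⟨w, hw, hres⟩ := hS₁.exists_stronglyResolves_of_forall_adj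
        (f := Embedding.joinInl G H) hG (joinGraph_dist_inl_inl hG) (hU a) (z := inr b)
        fun _ => trivial
      exact ⟨inl w, by simpa using hw, hres⟩
    · obtain ⟨w, hw, hres⟩ := hS₂.exists_stronglyResolves_of_forall_adj
        (f := Embedding.joinInr G H) hH (joinGraph_dist_inr_inr hH) (hU b) (z := inl a)
        fun _ => trivial
      exact ⟨inr w, by simpa using hw, stronglyResolves_comm.1 hres⟩
  rintro (a | b) (a' | b') hne
  · obtain ⟨w, hw, hres⟩ := hS₁ a a' (by rintro rfl; exact hne rfl)
    exact ⟨inl w, by simpa using hw,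
      ((Embedding.joinInl G H).stronglyResolves_iff (joinGraph_dist_inl_inl hG)).2 hres⟩
  · exact cross a b'
  · obtain ⟨w, hw, hres⟩ := cross a' b
    exact ⟨w, hw, stronglyResolves_comm.1 hres⟩
  · obtain ⟨w, hw, hres⟩ := hS₂ b b' (by rintro rfl; exact hne rfl)
    exact ⟨inr w, by simpa using hw,
      ((Embedding.joinInr G H).stronglyResolves_iff (joinGraph_dist_inr_inr hH)).2 hres⟩

end Join

theorem strongDim_join_of_diam_two_general {V W : Type*} [Fintype V] [Fintype W]
    (G : SimpleGraph V) (H : SimpleGraph W) [DecidableRel G.Adj] [DecidableRel H.Adj]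
    (hdG : G.diam = 2) (hdH : H.diam = 2)
    (h : G.maxDegree ≠ Fintype.card V - 1 ∨ H.maxDegree ≠ Fintype.card W - 1) :
    strongDim (joinGraph G H) = strongDim G + strongDim H := by
  have : Nonempty V := (nontrivial_of_diam_ne_zero (by omega : G.diam ≠ 0)).to_nonempty
  have : Nonempty W := (nontrivial_of_diam_ne_zero (by omega : H.diam ≠ 0)).to_nonempty
  have hG := ediam_le_two_of_diam_eq_two hdG
  have hH := ediam_le_two_of_diam_eq_two hdH
  obtain ⟨S₁, hS₁, hc₁⟩ := exists_isStrongResolvingSet_card_eq_strongDim G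
  obtain ⟨S₂, hS₂, hc₂⟩ := exists_isStrongResolvingSet_card_eq_strongDim H
  obtain ⟨S, hS, hc⟩ := exists_isStrongResolvingSet_card_eq_strongDim (joinGraph G H)
  apply le_antisymm
  · calc strongDim (joinGraph G H) ≤ #(S₁.disjSum S₂) :=
          strongDim_le (hS₁.disjSum_join hG hH hS₂
            (h.imp not_isUniversal_of_maxDegree_ne not_isUniversal_of_maxDegree_ne))
      _ = strongDim G + strongDim H := by rw [card_disjSum, hc₁, hc₂]
  · calc strongDim G + strongDim H ≤ #S.toLeft + #S.toRight :=
          add_le_add (strongDim_le (hS.toLeft_of_join hG)) (strongDim_le (hS.toRight_of_join hH))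
      _ = strongDim (joinGraph G H) := by rw [card_toLeft_add_card_toRight, hc]

/-- If `G`, `H` are connected graphs of order `n₁, n₂ ≥ 2` of diameter two
with maximum degrees `Δ₁ ≠ n₁ − 1` or `Δ₂ ≠ n₂ − 1`, then
`dim_s(G + H) = dim_s(G) + dim_s(H)`. -/
theorem strongDim_join_of_diam_two {V W : Type*} [Fintype V] [Fintype W]
    (G : SimpleGraph V) (H : SimpleGraph W) [DecidableRel G.Adj] [DecidableRel H.Adj]
    (hG : G.Connected) (hH : H.Connected)
    (hn1 : 2 ≤ Fintype.card V) (hn2 : 2 ≤ Fintype.card W)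
    (hdG : G.diam = 2) (hdH : H.diam = 2)
    (h : G.maxDegree ≠ Fintype.card V - 1 ∨ H.maxDegree ≠ Fintype.card W - 1) :
    strongDim (joinGraph G H) = strongDim G + strongDim H :=
  strongDim_join_of_diam_two_general G H hdG hdH h
end

section
/- Let H be a finite simple graph of order n₂ and maximum degree Δ. If Δ = n₂ − 1, then dim_s(K₁ + H) = n₂ + 1 − ϖ(H). -/
open SimpleGraph

/-!
`K₁ + H` has diameter at most two. In such a graph a vertex outside `{u, v}` strongly resolves
`u, v` exactly when `u ∼ v` and it is adjacent to only one of them, so `S` is a strong resolving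
set iff its complement is a twin-free clique, and `dim_s = n - ϖ`. A universal vertex of `H` is a
true twin of the apex of `K₁ + H`, which lets the apex be traded for it in a twin-free clique;
hence `ϖ(K₁ + H) = ϖ(H)`.
-/

open Finset

section DiameterTwo

variable {V : Type*} {G : SimpleGraph V}

lemma mem_closedNbhd_iff {u v : V} : u ∈ closedNbhd G v ↔ u = v ∨ G.Adj v u := Iff.rfl

lemma stronglyResolves_left (u v : V) : StronglyResolves G u u v :=
  Or.inr (by simp)

lemma stronglyResolves_right (u v : V) : StronglyResolves G v u v :=
  Or.inl (by simp)

lemma closedNbhd_ne_iff_of_adj {u v : V} (huv : G.Adj u v) :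
    closedNbhd G u ≠ closedNbhd G v ↔
      ∃ w, w ≠ u ∧ w ≠ v ∧ ¬(G.Adj u w ↔ G.Adj v w) := by
  constructor
  · intro hne
    by_contra! hw
    refine hne (Set.ext fun x => ?_)
    simp only [mem_closedNbhd_iff]
    by_cases hxu : x = u
    · subst hxu; simp [huv.symm]
    by_cases hxv : x = v
    · subst hxv; simp [huv]
    simp [hxu, hxv, hw x hxu hxv]
  · rintro ⟨w, hwu, hwv, hw⟩ heq
    have := Set.ext_iff.1 heq w
    simp only [mem_closedNbhd_iff, hwu, hwv, false_or] at this
    exact hw this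

open scoped Classical in
lemma dist_eq_ite_of_ediam_le_two (h : G.ediam ≤ 2) {u v : V} (huv : u ≠ v) :
    G.dist u v = if G.Adj u v then 1 else 2 := by
  have hle : G.edist u v ≤ 2 := edist_le_ediam.trans h
  have hreach : G.Reachable u v :=
    reachable_of_edist_ne_top (ne_top_of_le_ne_top (by decide) hle)
  split_ifs with hadj
  · exact dist_eq_one_iff_adj.2 hadj
  · have hlt := hreach.one_lt_dist_of_ne_of_not_adj huv hadj
    have : G.dist u v ≤ 2 := by
      rw [← hreach.coe_dist_eq_edist] at hle
      exact_mod_cast hle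
    omega

lemma stronglyResolves_iff_of_ediam_le_two (h : G.ediam ≤ 2) {w u v : V} (huv : u ≠ v)
    (hwu : w ≠ u) (hwv : w ≠ v) :
    StronglyResolves G w u v ↔ G.Adj u v ∧ ¬(G.Adj u w ↔ G.Adj v w) := by
  unfold StronglyResolves
  rw [dist_eq_ite_of_ediam_le_two h huv, dist_eq_ite_of_ediam_le_two h huv.symm,
    dist_eq_ite_of_ediam_le_two h hwu.symm, dist_eq_ite_of_ediam_le_two h hwv.symm,
    G.adj_comm v u]
  by_cases huv' : G.Adj u v <;> by_cases hu : G.Adj u w <;> by_cases hv : G.Adj v w <;>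
    simp [huv', hu, hv]

theorem isStrongResolvingSet_iff_isTwinFreeClique_compl [Fintype V] [DecidableEq V]
    (h : G.ediam ≤ 2) (S : Finset V) :
    IsStrongResolvingSet G S ↔ IsTwinFreeClique G Sᶜ := by
  constructor
  · intro hS
    have key : ∀ u ∉ S, ∀ v ∉ S, u ≠ v →
        G.Adj u v ∧ ∃ w, w ≠ u ∧ w ≠ v ∧ ¬(G.Adj u w ↔ G.Adj v w) := by
      intro u hu v hv huv
      obtain ⟨w, hwS, hw⟩ := hS u v huv
      have hwu : w ≠ u := by rintro rfl; exact hu hwS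
      have hwv : w ≠ v := by rintro rfl; exact hv hwS
      obtain ⟨hadj, hw⟩ := (stronglyResolves_iff_of_ediam_le_two h huv hwu hwv).1 hw
      exact ⟨hadj, w, hwu, hwv, hw⟩
    refine ⟨fun u hu v hv huv => ?_, fun u hu v hv huv => ?_⟩
    · simp only [coe_compl, Set.mem_compl_iff, mem_coe] at hu hv
      exact (key u hu v hv huv).1
    · rw [mem_compl] at hu hv
      exact (closedNbhd_ne_iff_of_adj (key u hu v hv huv).1).2 (key u hu v hv huv).2
  · rintro ⟨hclique, htwin⟩ u v huv
    by_cases hu : u ∈ S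
    · exact ⟨u, hu, stronglyResolves_left u v⟩
    by_cases hv : v ∈ S
    · exact ⟨v, hv, stronglyResolves_right u v⟩
    have hadj : G.Adj u v := hclique (by simpa using hu) (by simpa using hv) huv
    obtain ⟨w, hwu, hwv, hw⟩ := (closedNbhd_ne_iff_of_adj hadj).1
      (htwin u (by simpa using hu) v (by simpa using hv) huv)
    have hwS : w ∈ S := by
      by_contra hwS
      exact hw ⟨fun _ => hclique (by simpa using hv) (by simpa using hwS) hwv.symm,
        fun _ => hclique (by simpa using hu) (by simpa using hwS) hwu.symm⟩
    exact ⟨w, hwS, (stronglyResolves_iff_of_ediam_le_two h huv hwu hwv).2 ⟨hadj, hw⟩⟩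

end DiameterTwo

section TwinFreeCliqueNum

variable {V : Type*} [Fintype V] {G : SimpleGraph V}

lemma bddAbove_card_twinFreeClique :
    BddAbove {k | ∃ X : Finset V, IsTwinFreeClique G X ∧ X.card = k} :=
  ⟨Fintype.card V, by rintro k ⟨X, -, rfl⟩; exact card_le_univ X⟩

lemma IsTwinFreeClique.card_le_twinFreeCliqueNum {X : Finset V} (hX : IsTwinFreeClique G X) :
    X.card ≤ twinFreeCliqueNum G :=
  le_csSup bddAbove_card_twinFreeClique ⟨X, hX, rfl⟩

variable (G) in
lemma exists_isTwinFreeClique_card_eq_twinFreeCliqueNum :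
    ∃ X : Finset V, IsTwinFreeClique G X ∧ X.card = twinFreeCliqueNum G :=
  Nat.sSup_mem (s := {k | ∃ X : Finset V, IsTwinFreeClique G X ∧ X.card = k})
    ⟨0, ∅, ⟨by simp, by simp⟩, rfl⟩ bddAbove_card_twinFreeClique

theorem strongDim_eq_card_sub_twinFreeCliqueNum (h : G.ediam ≤ 2) :
    strongDim G = Fintype.card V - twinFreeCliqueNum G := by
  classical
  obtain ⟨X, hX, hXcard⟩ := exists_isTwinFreeClique_card_eq_twinFreeCliqueNum G
  have hXc : IsStrongResolvingSet G ↑Xᶜ :=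
    (isStrongResolvingSet_iff_isTwinFreeClique_compl h _).2 (by rwa [compl_compl])
  refine le_antisymm (Nat.sInf_le ⟨Xᶜ, hXc, by rw [card_compl, hXcard]⟩)
    (le_csInf ⟨_, Xᶜ, hXc, rfl⟩ ?_)
  rintro _ ⟨S, hS, rfl⟩
  have hSc := ((isStrongResolvingSet_iff_isTwinFreeClique_compl h S).1 hS).card_le_twinFreeCliqueNum
  rw [card_compl] at hSc
  have := card_le_univ S
  omega

end TwinFreeCliqueNum

section TwinReplacement

variable {V : Type*} [DecidableEq V] {G : SimpleGraph V}

lemma IsTwinFreeClique.insert_erase_of_closedNbhd_eq {X : Finset V} (hX : IsTwinFreeClique G X)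
    {x y : V} (hx : x ∈ X) (hxy : closedNbhd G x = closedNbhd G y) :
    IsTwinFreeClique G (insert y (X.erase x)) ∧ (insert y (X.erase x)).card = X.card := by
  have hy : y ∉ X.erase x := fun hy =>
    hX.2 y (mem_of_mem_erase hy) x hx (ne_of_mem_erase hy) hxy.symm
  have hfresh : ∀ z ∈ X.erase x, y ≠ z ∧ closedNbhd G y ≠ closedNbhd G z := fun z hz =>
    ⟨fun hyz => hy (hyz ▸ hz),
      hxy ▸ hX.2 x hx z (mem_of_mem_erase hz) (ne_of_mem_erase hz).symm⟩
  refine ⟨⟨?_, ?_⟩, by rw [card_insert_of_notMem hy, card_erase_add_one hx]⟩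
  · rw [coe_insert, SimpleGraph.isClique_insert]
    refine ⟨hX.1.subset (by simp), fun z hz hyz => ?_⟩
    have hz : z ∈ X.erase x := mem_coe.1 hz
    have : z ∈ closedNbhd G y :=
      hxy ▸ Or.inr (hX.1 hx (mem_of_mem_erase hz) (ne_of_mem_erase hz).symm)
    exact this.resolve_left hyz.symm
  · intro u hu v hv huv
    rw [mem_insert] at hu hv
    rcases hu with rfl | hu <;> rcases hv with rfl | hv
    · exact absurd rfl huv
    · exact (hfresh v hv).2
    · exact (hfresh u hu).2.symm
    · exact hX.2 u (mem_of_mem_erase hu) v (mem_of_mem_erase hv) huv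

end TwinReplacement

section Join

variable {V W : Type*} (G : SimpleGraph V) (H : SimpleGraph W)

lemma ediam_joinGraph_le_two [Nonempty V] [Nonempty W] : (joinGraph G H).ediam ≤ 2 := by
  have path (x z y : V ⊕ W) (hxz : (joinGraph G H).Adj x z) (hzy : (joinGraph G H).Adj z y) :
      (joinGraph G H).edist x y ≤ 2 :=
    edist_le (.cons hxz (.cons hzy .nil))
  have edge (x y : V ⊕ W) (hxy : (joinGraph G H).Adj x y) : (joinGraph G H).edist x y ≤ 2 :=
    (edist_eq_one_iff_adj.2 hxy).trans_le (by norm_num)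
  obtain ⟨a⟩ := ‹Nonempty V›
  obtain ⟨b⟩ := ‹Nonempty W›
  refine ediam_le_iff.2 ?_
  rintro (a₁ | b₁) (a₂ | b₂)
  · exact path _ (.inr b) _ trivial trivial
  · exact edge _ _ trivial
  · exact edge _ _ trivial
  · exact path _ (.inl a) _ trivial trivial

variable {G H}

lemma inr_mem_closedNbhd_joinGraph_inr {b b' : W} :
    Sum.inr b' ∈ closedNbhd (joinGraph G H) (.inr b) ↔ b' ∈ closedNbhd H b := by
  simp only [mem_closedNbhd_iff, Sum.inr.injEq]
  rfl

lemma closedNbhd_joinGraph_inr_eq_iff {b b' : W} :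
    closedNbhd (joinGraph G H) (.inr b) = closedNbhd (joinGraph G H) (.inr b') ↔
      closedNbhd H b = closedNbhd H b' := by
  constructor
  · intro h
    ext x
    simpa only [inr_mem_closedNbhd_joinGraph_inr] using Set.ext_iff.1 h (.inr x)
  · intro h
    ext (a | x)
    · exact iff_of_true (Or.inr trivial) (Or.inr trivial)
    · simpa only [inr_mem_closedNbhd_joinGraph_inr] using Set.ext_iff.1 h x

lemma isUniversal_joinGraph_inl {a : V} (ha : G.IsUniversal a) :
    (joinGraph G H).IsUniversal (.inl a) := by
  rintro (a' | b) hne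
  · exact ha (fun h => hne (congrArg Sum.inl h))
  · trivial

lemma isUniversal_joinGraph_inr {b : W} (hb : H.IsUniversal b) :
    (joinGraph G H).IsUniversal (.inr b) := by
  rintro (a | b') hne
  · trivial
  · exact hb (fun h => hne (congrArg Sum.inr h))

lemma IsTwinFreeClique.map_inr {X : Finset W} (hX : IsTwinFreeClique H X) :
    IsTwinFreeClique (joinGraph G H) (X.map .inr) := by
  refine ⟨?_, ?_⟩
  · rintro _ hu _ hv huv
    obtain ⟨u, hu', rfl⟩ := mem_map.1 hu
    obtain ⟨v, hv', rfl⟩ := mem_map.1 hv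
    exact hX.1 hu' hv' (fun h => huv (congrArg Sum.inr h))
  · rintro _ hu _ hv huv h
    obtain ⟨u, hu', rfl⟩ := mem_map.1 hu
    obtain ⟨v, hv', rfl⟩ := mem_map.1 hv
    exact hX.2 u hu' v hv' (fun h => huv (congrArg Sum.inr h))
      (closedNbhd_joinGraph_inr_eq_iff.1 h)

lemma IsTwinFreeClique.toRight {Y : Finset (V ⊕ W)} (hY : IsTwinFreeClique (joinGraph G H) Y) :
    IsTwinFreeClique H Y.toRight := by
  refine ⟨fun u hu v hv huv => ?_, fun u hu v hv huv => ?_⟩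
  · exact hY.1 (mem_toRight.1 hu) (mem_toRight.1 hv) (fun h => huv (Sum.inr_injective h))
  · rw [Ne, ← closedNbhd_joinGraph_inr_eq_iff (G := G)]
    exact hY.2 _ (mem_toRight.1 hu) _ (mem_toRight.1 hv) (fun h => huv (Sum.inr_injective h))

lemma closedNbhd_apex_eq_of_isUniversal {u : W} (hu : H.IsUniversal u) :
    closedNbhd (joinGraph (⊥ : SimpleGraph Unit) H) (.inl ()) =
      closedNbhd (joinGraph (⊥ : SimpleGraph Unit) H) (.inr u) := by
  rw [closedNbhd, closedNbhd,
    insert_neighborSet_eq_univ.2 (isUniversal_joinGraph_inl .of_subsingleton),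
    insert_neighborSet_eq_univ.2 (isUniversal_joinGraph_inr hu)]

end Join

section JoinK1

variable {W : Type*} [Fintype W] {H : SimpleGraph W}

theorem twinFreeCliqueNum_joinGraph_unit {u : W} (hu : H.IsUniversal u) :
    twinFreeCliqueNum (joinGraph (⊥ : SimpleGraph Unit) H) = twinFreeCliqueNum H := by
  classical
  refine le_antisymm ?_ ?_
  · obtain ⟨Y, hY, hYcard⟩ :=
      exists_isTwinFreeClique_card_eq_twinFreeCliqueNum (joinGraph (⊥ : SimpleGraph Unit) H)
    obtain ⟨Z, hZ, hZcard, hapex⟩ : ∃ Z, IsTwinFreeClique (joinGraph ⊥ H) Z ∧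
        Z.card = Y.card ∧ Sum.inl () ∉ Z := by
      by_cases hapex : Sum.inl () ∈ Y
      · obtain ⟨hZ, hZcard⟩ :=
          hY.insert_erase_of_closedNbhd_eq hapex (closedNbhd_apex_eq_of_isUniversal hu)
        exact ⟨_, hZ, hZcard, by simp⟩
      · exact ⟨Y, hY, rfl, hapex⟩
    have hleft : Z.toLeft = ∅ := eq_empty_of_forall_notMem fun a ha => hapex (mem_toLeft.1 ha)
    rw [← hYcard, ← hZcard, ← card_toLeft_add_card_toRight, hleft, card_empty, zero_add]
    exact hZ.toRight.card_le_twinFreeCliqueNum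
  · obtain ⟨X, hX, hXcard⟩ := exists_isTwinFreeClique_card_eq_twinFreeCliqueNum H
    rw [← hXcard, ← card_map .inr]
    exact hX.map_inr.card_le_twinFreeCliqueNum

lemma exists_isUniversal_of_maxDegree_eq [DecidableRel H.Adj]
    (h : (H.maxDegree : ℤ) = Fintype.card W - 1) : ∃ u, H.IsUniversal u := by
  have : Nonempty W := by
    rw [← Fintype.card_pos_iff]
    omega
  obtain ⟨u, hu⟩ := H.exists_maximal_degree_vertex
  exact ⟨u, (H.degree_eq_card_sub_one u).1 (by omega)⟩

end JoinK1

/-- Let `H` be a graph of order `n₂` and maximum degree `Δ`. If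
`Δ = n₂ − 1`, then `dim_s(K₁ + H) = n₂ + 1 − ϖ(H)`. -/
theorem strongDim_join_K1_of_dominant {W : Type*} [Fintype W]
    (H : SimpleGraph W) [DecidableRel H.Adj]
    (h : (H.maxDegree : ℤ) = (Fintype.card W : ℤ) - 1) :
    strongDim (joinGraph (⊥ : SimpleGraph Unit) H) =
      Fintype.card W + 1 - twinFreeCliqueNum H := by
  obtain ⟨u, hu⟩ := exists_isUniversal_of_maxDegree_eq h
  have : Nonempty W := ⟨u⟩
  rw [strongDim_eq_card_sub_twinFreeCliqueNum (ediam_joinGraph_le_two _ _),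
    twinFreeCliqueNum_joinGraph_unit hu, Fintype.card_sum, Fintype.card_unit, add_comm]
end
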